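/- For every 1 ≤ m ≤ k, the t̄-derivative of the adjoint-eigenfunction Wronskian is ∂̄𝒲_m = ŝ₁·𝒲_m + W[Ψ₁,…,Ψ_{m−1},Ψ_{m+1}], where the last Wronskian has the final entry Ψ_m replaced by Ψ_{m+1}. -/

import Mathlib

/-- Partial derivative with respect to the first variable `x`. -/
noncomputable def pdx (f : ℝ → ℝ → ℝ) : ℝ → ℝ → ℝ :=
  fun x t => deriv (fun y => f y t) x

/-- Partial derivative with respect to the second variable `t̄`. -/
noncomputable def pdt (f : ℝ → ℝ → ℝ) : ℝ → ℝ → ℝ :=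
  fun x t => deriv (fun s => f x s) t

/-- Smoothness of a function of two real variables. -/
def Smooth2 (f : ℝ → ℝ → ℝ) : Prop :=
  ContDiff ℝ (⊤ : ℕ∞) (Function.uncurry f)

/-- Wronskian in `x` of an `m`-tuple of functions of `(x, t̄)`:
`det(∂_x^{i−1} f_j)`, with the `0×0` determinant equal to `1`. -/
noncomputable def wronskian (m : ℕ) (g : Fin m → ℝ → ℝ → ℝ) : ℝ → ℝ → ℝ :=
  fun x t =>
    (Matrix.of fun i j : Fin m => iteratedDeriv (i : ℕ) (fun y => g j y t) x).det

/-- `W_m = W[Φ₁,…,Φ_m]` (so `W₀ = 1`). -/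
noncomputable def Wr (Φ : ℕ → ℝ → ℝ → ℝ) (m : ℕ) : ℝ → ℝ → ℝ :=
  wronskian m (fun j => Φ ((j : ℕ) + 1))

/-- `W[Φ₁,…,Φ_{m−1},Φ_{m+1}]`: the Wronskian with the last entry shifted by one. -/
noncomputable def WrShift (Φ : ℕ → ℝ → ℝ → ℝ) (m : ℕ) : ℝ → ℝ → ℝ :=
  wronskian m (fun j => Φ (if (j : ℕ) + 1 = m then m + 1 else (j : ℕ) + 1))

namespace Ghost

lemma slice_x {f : ℝ → ℝ → ℝ} (hf : Smooth2 f) (t : ℝ) : ContDiff ℝ (⊤ : ℕ∞) (fun y => f y t) :=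
  hf.comp (contDiff_id.prodMk contDiff_const)

lemma slice_t {f : ℝ → ℝ → ℝ} (hf : Smooth2 f) (x : ℝ) : ContDiff ℝ (⊤ : ℕ∞) (fun s => f x s) :=
  hf.comp (contDiff_const.prodMk contDiff_id)

lemma pdx_hasDerivAt {f : ℝ → ℝ → ℝ} (hf : Smooth2 f) (x t : ℝ) :
    HasDerivAt (fun y => f y t) (pdx f x t) x :=
  (((slice_x hf t).differentiable (by simp)) x).hasDerivAt

lemma pdt_hasDerivAt {f : ℝ → ℝ → ℝ} (hf : Smooth2 f) (x t : ℝ) :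
    HasDerivAt (fun s => f x s) (pdt f x t) t :=
  (((slice_t hf x).differentiable (by simp)) t).hasDerivAt

lemma pdx_eq_fderiv {f : ℝ → ℝ → ℝ} (hf : Smooth2 f) (x t : ℝ) :
    pdx f x t = fderiv ℝ (Function.uncurry f) (x, t) (1, 0) := by
  have h : HasDerivAt (fun y => f y t)
      (fderiv ℝ (Function.uncurry f) (x, t) (1, 0)) x := by
    have := ((hf.differentiable (by simp) (x, t)).hasFDerivAt).comp_hasDerivAt x
      ((hasDerivAt_id x).prodMk (hasDerivAt_const x t))
    exact this
  simp only [pdx, pdt]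
  exact h.deriv

lemma pdt_eq_fderiv {f : ℝ → ℝ → ℝ} (hf : Smooth2 f) (x t : ℝ) :
    pdt f x t = fderiv ℝ (Function.uncurry f) (x, t) (0, 1) := by
  have h : HasDerivAt (fun s => f x s)
      (fderiv ℝ (Function.uncurry f) (x, t) (0, 1)) t := by
    have := ((hf.differentiable (by simp) (x, t)).hasFDerivAt).comp_hasDerivAt t
      ((hasDerivAt_const t x).prodMk (hasDerivAt_id t))
    exact this
  simp only [pdx, pdt]
  exact h.deriv

lemma uncurry_pdx {f : ℝ → ℝ → ℝ} (hf : Smooth2 f) :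
    Function.uncurry (pdx f) = fun p : ℝ × ℝ => fderiv ℝ (Function.uncurry f) p (1, 0) := by
  funext p
  exact pdx_eq_fderiv hf p.1 p.2

lemma uncurry_pdt {f : ℝ → ℝ → ℝ} (hf : Smooth2 f) :
    Function.uncurry (pdt f) = fun p : ℝ × ℝ => fderiv ℝ (Function.uncurry f) p (0, 1) := by
  funext p
  exact pdt_eq_fderiv hf p.1 p.2

lemma smooth2_pdx {f : ℝ → ℝ → ℝ} (hf : Smooth2 f) : Smooth2 (pdx f) := by
  unfold Smooth2
  rw [uncurry_pdx hf]
  exact (hf.fderiv_right (by simp)).clm_apply contDiff_const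

lemma smooth2_pdt {f : ℝ → ℝ → ℝ} (hf : Smooth2 f) : Smooth2 (pdt f) := by
  unfold Smooth2
  rw [uncurry_pdt hf]
  exact (hf.fderiv_right (by simp)).clm_apply contDiff_const

lemma pdt_pdx_comm {f : ℝ → ℝ → ℝ} (hf : Smooth2 f) (x t : ℝ) :
    pdt (pdx f) x t = pdx (pdt f) x t := by
  have hdF : Differentiable ℝ (fderiv ℝ (Function.uncurry f)) :=
    (hf.fderiv_right (m := (⊤ : ℕ∞)) (by simp)).differentiable (by simp)
  have e1 : pdt (pdx f) x t
      = fderiv ℝ (fderiv ℝ (Function.uncurry f)) (x, t) (0, 1) (1, 0) := by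
    rw [pdt_eq_fderiv (smooth2_pdx hf) x t]
    rw [show Function.uncurry (pdx f)
        = fun p : ℝ × ℝ => fderiv ℝ (Function.uncurry f) p ((1:ℝ), (0:ℝ)) from uncurry_pdx hf]
    rw [fderiv_clm_apply (hdF _) (differentiableAt_const _)]
    simp
  have e2 : pdx (pdt f) x t
      = fderiv ℝ (fderiv ℝ (Function.uncurry f)) (x, t) (1, 0) (0, 1) := by
    rw [pdx_eq_fderiv (smooth2_pdt hf) x t]
    rw [show Function.uncurry (pdt f)
        = fun p : ℝ × ℝ => fderiv ℝ (Function.uncurry f) p ((0:ℝ), (1:ℝ)) from uncurry_pdt hf]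
    rw [fderiv_clm_apply (hdF _) (differentiableAt_const _)]
    simp
  rw [e1, e2]
  exact (hf.contDiffAt.isSymmSndFDerivAt (by rw [minSmoothness_of_isRCLikeNormedField]; exact WithTop.coe_le_coe.2 (le_top : (2:ℕ∞) ≤ ⊤))) _ _


/-- iterated `x`-partial derivative -/
noncomputable def DX (f : ℝ → ℝ → ℝ) : ℕ → ℝ → ℝ → ℝ
  | 0 => f
  | n + 1 => pdx (DX f n)

lemma smooth2_DX {f : ℝ → ℝ → ℝ} (hf : Smooth2 f) : ∀ n, Smooth2 (DX f n)
  | 0 => hf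
  | n + 1 => smooth2_pdx (smooth2_DX hf n)

lemma iteratedDeriv_slice (g : ℝ → ℝ → ℝ) (n : ℕ) (x t : ℝ) :
    iteratedDeriv n (fun y => g y t) x = DX g n x t := by
  induction n generalizing x with
  | zero => simp [DX]
  | succ n ih =>
    rw [iteratedDeriv_succ]
    have : (iteratedDeriv n fun y => g y t) = fun y => DX g n y t :=
      funext fun y => ih y
    rw [this]
    rfl

lemma pdt_DX {f : ℝ → ℝ → ℝ} (hf : Smooth2 f) (n : ℕ) (x t : ℝ) :
    pdt (DX f (n + 1)) x t = pdx (pdt (DX f n)) x t :=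
  pdt_pdx_comm (smooth2_DX hf n) x t

/-- the correction coefficients -/
noncomputable def Cc (Φ Ψ₁ : ℝ → ℝ → ℝ) : ℕ → ℕ → ℝ → ℝ → ℝ
  | 0, _ => fun _ _ => 0
  | n + 1, 0 => fun x t => Φ x t * DX Ψ₁ n x t + pdx (Cc Φ Ψ₁ n 0) x t
  | n + 1, r + 1 => fun x t => pdx (Cc Φ Ψ₁ n (r + 1)) x t + Cc Φ Ψ₁ n r x t

lemma smooth2_zero : Smooth2 (fun _ _ => (0:ℝ)) := by
  have : Function.uncurry (fun _ _ => (0:ℝ)) = fun _ : ℝ × ℝ => (0:ℝ) := rfl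
  rw [Smooth2, this]; exact contDiff_const

lemma smooth2_mul {f g : ℝ → ℝ → ℝ} (hf : Smooth2 f) (hg : Smooth2 g) :
    Smooth2 (fun x t => f x t * g x t) := by
  have : Function.uncurry (fun x t => f x t * g x t)
      = fun p => Function.uncurry f p * Function.uncurry g p := rfl
  rw [Smooth2, this]; exact hf.mul hg

lemma smooth2_add {f g : ℝ → ℝ → ℝ} (hf : Smooth2 f) (hg : Smooth2 g) :
    Smooth2 (fun x t => f x t + g x t) := by
  have : Function.uncurry (fun x t => f x t + g x t)
      = fun p => Function.uncurry f p + Function.uncurry g p := rfl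
  rw [Smooth2, this]; exact hf.add hg

lemma smooth2_Cc {Φ Ψ₁ : ℝ → ℝ → ℝ} (hΦ : Smooth2 Φ) (h1 : Smooth2 Ψ₁) :
    ∀ n r, Smooth2 (Cc Φ Ψ₁ n r)
  | 0, _ => smooth2_zero
  | n + 1, 0 => smooth2_add (smooth2_mul hΦ (smooth2_DX h1 n))
      (smooth2_pdx (smooth2_Cc hΦ h1 n 0))
  | n + 1, r + 1 => smooth2_add (smooth2_pdx (smooth2_Cc hΦ h1 n (r + 1)))
      (smooth2_Cc hΦ h1 n r)

lemma pdx_zero : pdx (fun _ _ => (0:ℝ)) = fun _ _ => 0 := by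
  funext x t; simp [pdx]

lemma Cc_vanish (Φ Ψ₁ : ℝ → ℝ → ℝ) : ∀ n r, n ≤ r → Cc Φ Ψ₁ n r = fun _ _ => 0
  | 0, _, _ => rfl
  | n + 1, r + 1, h => by
    have h1 : Cc Φ Ψ₁ n (r + 1) = fun _ _ => 0 :=
      Cc_vanish Φ Ψ₁ n (r + 1) (le_trans (Nat.le_of_succ_le_succ h) (Nat.le_succ r))
    have h2 : Cc Φ Ψ₁ n r = fun _ _ => 0 :=
      Cc_vanish Φ Ψ₁ n r (Nat.le_of_succ_le_succ h)
    show (fun x t => pdx (Cc Φ Ψ₁ n (r + 1)) x t + Cc Φ Ψ₁ n r x t) = fun _ _ => 0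
    rw [h1, h2, pdx_zero]
    funext x t; simp

/-- KEY LEMMA (Part C): evolution of the iterated derivatives. -/
lemma key (Φ₁ Ψ1 Ψj Ψj' shj : ℝ → ℝ → ℝ)
    (h1 : Smooth2 Ψ1) (hj : Smooth2 Ψj) (hj' : Smooth2 Ψj') (hs : Smooth2 shj)
    (hΦ : Smooth2 Φ₁)
    (hpot : ∀ x t, pdx shj x t = Φ₁ x t * Ψj x t)
    (hflow : ∀ x t, pdt Ψj x t = Ψ1 x t * shj x t + Ψj' x t) :
    ∀ n x t, pdt (DX Ψj n) x t = shj x t * DX Ψ1 n x t + DX Ψj' n x t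
      + ∑ r ∈ Finset.range n, Cc Φ₁ Ψ1 n r x t * DX Ψj r x t := by
  intro n
  induction n with
  | zero =>
    intro x t
    simp only [DX, Finset.range_zero, Finset.sum_empty, add_zero]
    rw [hflow x t]; ring
  | succ n IH =>
    intro x t
    have e1 : pdt (DX Ψj (n + 1)) x t = pdx (pdt (DX Ψj n)) x t := pdt_DX hj n x t
    have e2 : (fun y => pdt (DX Ψj n) y t)
        = (fun y => shj y t * DX Ψ1 n y t + DX Ψj' n y t
            + ∑ r ∈ Finset.range n, Cc Φ₁ Ψ1 n r y t * DX Ψj r y t) :=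
      funext fun y => IH y t
    have hD : HasDerivAt (fun y => shj y t * DX Ψ1 n y t + DX Ψj' n y t
          + ∑ r ∈ Finset.range n, Cc Φ₁ Ψ1 n r y t * DX Ψj r y t)
        ((pdx shj x t * DX Ψ1 n x t + shj x t * DX Ψ1 (n + 1) x t) + DX Ψj' (n + 1) x t
          + ∑ r ∈ Finset.range n, (pdx (Cc Φ₁ Ψ1 n r) x t * DX Ψj r x t
              + Cc Φ₁ Ψ1 n r x t * DX Ψj (r + 1) x t)) x := by
      refine HasDerivAt.add (HasDerivAt.add ?_ ?_) (HasDerivAt.fun_sum fun r _ => ?_)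
      · exact (pdx_hasDerivAt hs x t).mul (pdx_hasDerivAt (smooth2_DX h1 n) x t)
      · exact pdx_hasDerivAt (smooth2_DX hj' n) x t
      · exact (pdx_hasDerivAt (smooth2_Cc hΦ h1 n r) x t).mul
          (pdx_hasDerivAt (smooth2_DX hj r) x t)
    have e3 : pdx (pdt (DX Ψj n)) x t
        = (pdx shj x t * DX Ψ1 n x t + shj x t * DX Ψ1 (n + 1) x t) + DX Ψj' (n + 1) x t
          + ∑ r ∈ Finset.range n, (pdx (Cc Φ₁ Ψ1 n r) x t * DX Ψj r x t
              + Cc Φ₁ Ψ1 n r x t * DX Ψj (r + 1) x t) := by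
      show deriv (fun y => pdt (DX Ψj n) y t) x = _
      rw [e2]
      exact hD.deriv
    rw [e1, e3, hpot x t]
    -- now pure algebra with the sums
    have hv : pdx (Cc Φ₁ Ψ1 n n) x t = 0 := by
      rw [Cc_vanish Φ₁ Ψ1 n n le_rfl, pdx_zero]
    have hshift : ∑ r ∈ Finset.range n, pdx (Cc Φ₁ Ψ1 n r) x t * DX Ψj r x t
        = ∑ r ∈ Finset.range n, pdx (Cc Φ₁ Ψ1 n (r + 1)) x t * DX Ψj (r + 1) x t
          + pdx (Cc Φ₁ Ψ1 n 0) x t * DX Ψj 0 x t := by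
      have hs1 := Finset.sum_range_succ (fun r => pdx (Cc Φ₁ Ψ1 n r) x t * DX Ψj r x t) n
      have hs2 := Finset.sum_range_succ' (fun r => pdx (Cc Φ₁ Ψ1 n r) x t * DX Ψj r x t) n
      rw [hs2, hv, zero_mul, add_zero] at hs1
      exact hs1.symm
    have htarget : ∑ r ∈ Finset.range (n + 1), Cc Φ₁ Ψ1 (n + 1) r x t * DX Ψj r x t
        = ∑ r ∈ Finset.range n, (pdx (Cc Φ₁ Ψ1 n (r + 1)) x t + Cc Φ₁ Ψ1 n r x t)
              * DX Ψj (r + 1) x t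
          + (Φ₁ x t * DX Ψ1 n x t + pdx (Cc Φ₁ Ψ1 n 0) x t) * DX Ψj 0 x t := by
      rw [Finset.sum_range_succ' (fun r => Cc Φ₁ Ψ1 (n + 1) r x t * DX Ψj r x t) n]
      rfl
    rw [htarget, Finset.sum_add_distrib, hshift]
    have : ∑ r ∈ Finset.range n, (pdx (Cc Φ₁ Ψ1 n (r + 1)) x t + Cc Φ₁ Ψ1 n r x t)
        * DX Ψj (r + 1) x t
        = ∑ r ∈ Finset.range n, pdx (Cc Φ₁ Ψ1 n (r + 1)) x t * DX Ψj (r + 1) x t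
          + ∑ r ∈ Finset.range n, Cc Φ₁ Ψ1 n r x t * DX Ψj (r + 1) x t := by
      rw [← Finset.sum_add_distrib]
      exact Finset.sum_congr rfl fun r _ => by ring
    rw [this]
    show _ = shj x t * DX Ψ1 (n + 1) x t + DX Ψj' (n + 1) x t + _
    have h0 : DX Ψj 0 x t = Ψj x t := rfl
    rw [h0]
    ring

end Ghost

namespace GhostD
open Matrix Finset

lemma hasDerivAt_det {m : ℕ} {A : ℝ → Matrix (Fin m) (Fin m) ℝ}
    {A' : Matrix (Fin m) (Fin m) ℝ} {t : ℝ}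
    (h : ∀ i j, HasDerivAt (fun s => A s i j) (A' i j) t) :
    HasDerivAt (fun s => (A s).det)
      (∑ j, ((A t).updateCol j (fun i => A' i j)).det) t := by
  have main : HasDerivAt (fun s => (A s).det)
      (∑ σ : Equiv.Perm (Fin m), ((Equiv.Perm.sign σ : ℤ) : ℝ)
        * ∑ i, (∏ l ∈ univ.erase i, A t (σ l) l) • A' (σ i) i) t := by
    have e : (fun s => (A s).det)
        = fun s => ∑ σ : Equiv.Perm (Fin m), ((Equiv.Perm.sign σ : ℤ) : ℝ)
            * ∏ i, A s (σ i) i := funext fun s => det_apply' (A s)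
    rw [e]
    exact HasDerivAt.fun_sum fun σ _ =>
      ((HasDerivAt.fun_finsetProd fun i _ => h (σ i) i).const_mul _)
  convert main using 1
  calc ∑ j, ((A t).updateCol j (fun i => A' i j)).det
      = ∑ j, ∑ σ : Equiv.Perm (Fin m), ((Equiv.Perm.sign σ : ℤ) : ℝ)
          * (A' (σ j) j * ∏ l ∈ univ.erase j, A t (σ l) l) := by
        refine Finset.sum_congr rfl fun j _ => ?_
        rw [det_apply']
        refine Finset.sum_congr rfl fun σ _ => ?_
        congr 1
        rw [← Finset.mul_prod_erase univ _ (mem_univ j)]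
        congr 1
        · exact updateCol_self
        · exact Finset.prod_congr rfl fun l hl =>
            updateCol_ne (Finset.ne_of_mem_erase hl)
    _ = ∑ σ : Equiv.Perm (Fin m), ((Equiv.Perm.sign σ : ℤ) : ℝ)
          * ∑ i, (∏ l ∈ univ.erase i, A t (σ l) l) • A' (σ i) i := by
        rw [Finset.sum_comm]
        refine Finset.sum_congr rfl fun σ _ => ?_
        rw [Finset.mul_sum]
        exact Finset.sum_congr rfl fun j _ => by
          rw [smul_eq_mul]; ring

lemma sum_det_update_mul {m : ℕ} (B L : Matrix (Fin m) (Fin m) ℝ) :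
    ∑ j, (B.updateCol j (fun i => (L * B) i j)).det = B.det * L.trace := by
  have e1 : ∀ j : Fin m, (B.updateCol j (fun i => (L * B) i j)).det
      = (B.adjugate * (L * B)) j j := by
    intro j
    rw [← cramer_apply, cramer_eq_adjugate_mulVec]
    simp [Matrix.mulVec, dotProduct, Matrix.mul_apply]
  calc ∑ j, (B.updateCol j (fun i => (L * B) i j)).det
      = (B.adjugate * (L * B)).trace := Finset.sum_congr rfl fun j _ => e1 j
    _ = ((L * B) * B.adjugate).trace := trace_mul_comm _ _
    _ = (L * (B * B.adjugate)).trace := by rw [Matrix.mul_assoc]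
    _ = (L * (B.det • 1)).trace := by rw [mul_adjugate]
    _ = B.det * L.trace := by
        rw [Matrix.mul_smul, Matrix.mul_one, trace_smul, smul_eq_mul]

end GhostD

section Final
open Matrix Finset Ghost GhostD

/-- for `1 ≤ m ≤ k`, the `t̄`-derivative of the adjoint-eigenfunction
Wronskian is `∂̄𝒲_m = ŝ₁·𝒲_m + W[Ψ₁,…,Ψ_{m−1},Ψ_{m+1}]`. Here `sh j` stands for `ŝ_j`. -/
theorem ghost_flow_of_adjoint_wronskian
    (k : ℕ) (Ψ : ℕ → ℝ → ℝ → ℝ) (Φ₁ : ℝ → ℝ → ℝ) (sh : ℕ → ℝ → ℝ → ℝ)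
    (hΨ : ∀ j, 1 ≤ j → j ≤ k + 1 → Smooth2 (Ψ j))
    (hΦ₁ : Smooth2 Φ₁)
    (hsh : ∀ j, 1 ≤ j → j ≤ k → Smooth2 (sh j))
    (hpot : ∀ j, 1 ≤ j → j ≤ k → ∀ x t, pdx (sh j) x t = Φ₁ x t * Ψ j x t)
    (hflow : ∀ j, 1 ≤ j → j ≤ k → ∀ x t,
      pdt (Ψ j) x t = Ψ 1 x t * sh j x t + Ψ (j + 1) x t) :
    ∀ m, 1 ≤ m → m ≤ k → ∀ x t,
      pdt (Wr Ψ m) x t = sh 1 x t * Wr Ψ m x t + WrShift Ψ m x t := by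
  intro m hm1 hmk x t
  have hΨ1 : Smooth2 (Ψ 1) := hΨ 1 le_rfl (by omega)
  -- the Wronskian matrix as a function of (x, t)
  set M : ℝ → ℝ → Matrix (Fin m) (Fin m) ℝ :=
    fun x t => Matrix.of fun i j : Fin m => DX (Ψ ((j : ℕ) + 1)) (i : ℕ) x t with hM
  have hcol : ∀ j : Fin m, Smooth2 (Ψ ((j : ℕ) + 1)) := fun j =>
    hΨ _ (by omega) (by have := j.isLt; omega)
  have hcol' : ∀ j : Fin m, Smooth2 (Ψ ((j : ℕ) + 2)) := fun j =>
    hΨ _ (by omega) (by have := j.isLt; omega)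
  have hshcol : ∀ j : Fin m, Smooth2 (sh ((j : ℕ) + 1)) := fun j =>
    hsh _ (by omega) (by have := j.isLt; omega)
  -- Wr as a determinant
  have hWr : ∀ x t, Wr Ψ m x t = (M x t).det := by
    intro x t
    show (Matrix.of fun i j : Fin m =>
      iteratedDeriv (i : ℕ) (fun y => Ψ ((j : ℕ) + 1) y t) x).det = _
    congr 1
    ext i j
    exact iteratedDeriv_slice _ _ _ _
  -- the t-derivative of the determinant
  have hd : HasDerivAt (fun s => (M x s).det)
      (∑ j, ((M x t).updateCol j
        (fun i => pdt (DX (Ψ ((j : ℕ) + 1)) (i : ℕ)) x t)).det) t := by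
    refine hasDerivAt_det fun i j => ?_
    exact pdt_hasDerivAt (smooth2_DX (hcol j) (i : ℕ)) x t
  have hWd : pdt (Wr Ψ m) x t
      = ∑ j, ((M x t).updateCol j
        (fun i => pdt (DX (Ψ ((j : ℕ) + 1)) (i : ℕ)) x t)).det := by
    show deriv (fun s => Wr Ψ m x s) t = _
    have : (fun s => Wr Ψ m x s) = fun s => (M x s).det := funext fun s => hWr x s
    rw [this]
    exact hd.deriv
  -- special column indices
  set j0 : Fin m := ⟨0, hm1⟩ with hj0
  set jm : Fin m := ⟨m - 1, by omega⟩ with hjm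
  set u : Fin m → ℝ := fun i => M x t i j0 with hu
  set w : Fin m → Fin m → ℝ := fun j i => DX (Ψ ((j : ℕ) + 2)) (i : ℕ) x t with hw
  set L : Matrix (Fin m) (Fin m) ℝ :=
    Matrix.of fun i r : Fin m =>
      if (r : ℕ) < (i : ℕ) then Cc Φ₁ (Ψ 1) (i : ℕ) (r : ℕ) x t else 0 with hL
  -- key evolution formula for each entry
  have hkey : ∀ (j : Fin m) (i : ℕ),
      pdt (DX (Ψ ((j : ℕ) + 1)) i) x t
        = sh ((j : ℕ) + 1) x t * DX (Ψ 1) i x t + DX (Ψ ((j : ℕ) + 2)) i x t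
          + ∑ r ∈ Finset.range i, Cc Φ₁ (Ψ 1) i r x t * DX (Ψ ((j : ℕ) + 1)) r x t := by
    intro j i
    exact key Φ₁ (Ψ 1) (Ψ ((j : ℕ) + 1)) (Ψ ((j : ℕ) + 2)) (sh ((j : ℕ) + 1))
      hΨ1 (hcol j) (hcol' j) (hshcol j) hΦ₁
      (hpot _ (by omega) (by have := j.isLt; omega))
      (hflow _ (by omega) (by have := j.isLt; omega)) i x t
  -- decompose each updated column
  have hvec : ∀ j : Fin m,
      (fun i : Fin m => pdt (DX (Ψ ((j : ℕ) + 1)) (i : ℕ)) x t)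
        = (sh ((j : ℕ) + 1) x t • u + w j + fun i => (L * M x t) i j) := by
    intro j
    funext i
    show _ = sh ((j : ℕ) + 1) x t * u i + w j i + (L * M x t) i j
    rw [hkey j (i : ℕ)]
    have e2 : ∑ r ∈ Finset.range (i : ℕ),
        Cc Φ₁ (Ψ 1) (i : ℕ) r x t * DX (Ψ ((j : ℕ) + 1)) r x t = (L * M x t) i j := by
      have e1 : (L * M x t) i j
          = ∑ r : Fin m, (if (r : ℕ) < (i : ℕ)
              then Cc Φ₁ (Ψ 1) (i : ℕ) (r : ℕ) x t * DX (Ψ ((j : ℕ) + 1)) (r : ℕ) x t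
              else 0) := by
        rw [Matrix.mul_apply]
        refine Finset.sum_congr rfl fun r _ => ?_
        show (if (r : ℕ) < (i : ℕ) then Cc Φ₁ (Ψ 1) (i : ℕ) (r : ℕ) x t else 0)
            * DX (Ψ ((j : ℕ) + 1)) (r : ℕ) x t = _
        rw [ite_mul, zero_mul]
      rw [e1, Fin.sum_univ_eq_sum_range
        (fun r => if r < (i : ℕ)
          then Cc Φ₁ (Ψ 1) (i : ℕ) r x t * DX (Ψ ((j : ℕ) + 1)) r x t else 0) m]
      rw [← Finset.sum_subset (Finset.range_subset_range.2 (le_of_lt i.isLt))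
        (fun r _ hr => by rw [if_neg (by simpa using hr)])]
      exact Finset.sum_congr rfl fun r hr => by
        rw [if_pos (Finset.mem_range.1 hr)]
    rw [e2]
    rfl
  -- split the sum of determinants into three parts
  have hsplit : ∀ j : Fin m,
      ((M x t).updateCol j
        (fun i => pdt (DX (Ψ ((j : ℕ) + 1)) (i : ℕ)) x t)).det
      = sh ((j : ℕ) + 1) x t * ((M x t).updateCol j u).det
        + ((M x t).updateCol j (w j)).det
        + ((M x t).updateCol j (fun i => (L * M x t) i j)).det := by
    intro j
    rw [hvec j, det_updateCol_add, det_updateCol_add, det_updateCol_smul]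
  -- Term 1
  have ht1 : ∑ j : Fin m, sh ((j : ℕ) + 1) x t * ((M x t).updateCol j u).det
      = sh 1 x t * (M x t).det := by
    rw [Finset.sum_eq_single_of_mem j0 (Finset.mem_univ _)]
    · have : (M x t).updateCol j0 u = M x t := by
        ext i j
        by_cases hj : j = j0
        · subst hj; rw [Matrix.updateCol_self]
        · rw [Matrix.updateCol_ne hj]
      rw [this]
    · intro j _ hj
      have hz : ((M x t).updateCol j u).det = 0 := by
        refine Matrix.det_zero_of_column_eq (Ne.symm hj) fun r => ?_
        rw [Matrix.updateCol_ne (Ne.symm hj), Matrix.updateCol_self]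
      rw [hz, mul_zero]
  -- Term 2
  have ht2 : ∑ j : Fin m, ((M x t).updateCol j (w j)).det = WrShift Ψ m x t := by
    rw [Finset.sum_eq_single_of_mem jm (Finset.mem_univ _)]
    · show _ = wronskian m (fun j => Ψ (if (j : ℕ) + 1 = m then m + 1 else (j : ℕ) + 1)) x t
      show _ = (Matrix.of fun i j : Fin m => iteratedDeriv (i : ℕ)
        (fun y => Ψ (if (j : ℕ) + 1 = m then m + 1 else (j : ℕ) + 1) y t) x).det
      congr 1
      ext i j
      rw [Matrix.of_apply, iteratedDeriv_slice]
      by_cases hj : j = jm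
      · subst hj
        rw [Matrix.updateCol_self]
        have h1 : ((jm : ℕ)) + 1 = m := by show m - 1 + 1 = m; omega
        rw [if_pos h1]
        have h2 : ((jm : ℕ)) + 2 = m + 1 := by show m - 1 + 2 = m + 1; omega
        show DX (Ψ ((jm : ℕ) + 2)) (i : ℕ) x t = DX (Ψ (m + 1)) (i : ℕ) x t
        rw [h2]
      · rw [Matrix.updateCol_ne hj]
        have hne : ¬((j : ℕ) + 1 = m) := by
          intro hc
          apply hj
          apply Fin.ext
          show (j : ℕ) = m - 1
          omega
        rw [if_neg hne]
        rfl
    · intro j _ hj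
      have hjv : (j : ℕ) ≠ m - 1 := by
        intro hc; exact hj (Fin.ext (show (j : ℕ) = m - 1 from hc))
      have hlt : (j : ℕ) + 1 < m := by have := j.isLt; omega
      refine Matrix.det_zero_of_column_eq
        (i := (⟨(j : ℕ) + 1, hlt⟩ : Fin m)) (j := j)
        (Fin.ne_of_val_ne (by simp)) fun r => ?_
      rw [Matrix.updateCol_ne (Fin.ne_of_val_ne (by simp)),
        Matrix.updateCol_self]
      rfl
  -- Term 3
  have ht3 : ∑ j : Fin m, ((M x t).updateCol j (fun i => (L * M x t) i j)).det
      = 0 := by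
    rw [sum_det_update_mul]
    have : L.trace = 0 := by
      simp [Matrix.trace, Matrix.diag, hL]
    rw [this, mul_zero]
  -- assemble
  rw [hWd]
  calc ∑ j, ((M x t).updateCol j
        (fun i => pdt (DX (Ψ ((j : ℕ) + 1)) (i : ℕ)) x t)).det
      = ∑ j : Fin m, (sh ((j : ℕ) + 1) x t * ((M x t).updateCol j u).det
          + ((M x t).updateCol j (w j)).det
          + ((M x t).updateCol j (fun i => (L * M x t) i j)).det) :=
        Finset.sum_congr rfl fun j _ => hsplit j
    _ = (∑ j : Fin m, sh ((j : ℕ) + 1) x t * ((M x t).updateCol j u).det)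
          + (∑ j : Fin m, ((M x t).updateCol j (w j)).det)
          + ∑ j : Fin m, ((M x t).updateCol j (fun i => (L * M x t) i j)).det := by
        rw [← Finset.sum_add_distrib, ← Finset.sum_add_distrib]
    _ = sh 1 x t * (M x t).det + WrShift Ψ m x t + 0 := by rw [ht1, ht2, ht3]
    _ = sh 1 x t * Wr Ψ m x t + WrShift Ψ m x t := by rw [hWr x t, add_zero]

end Final
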